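/- arXiv:1411.6732 — 2 statements merged into one kernel-verified Lean document; each statement's English description precedes it below -/
import Mathlib

section
/- For integers m ≥ 3 and n ≥ 2, the wreath product ℤ_m ≀ ℤ_n = (ℤ_m)ⁿ ⋊ ℤ_n (with ℤ_n cyclically permuting coordinates) is not CCA. Specifically, with generators a = ((1,0,…,0),0) and b = ((0,…,0),1), the map ((x₁,x₂,…,x_n),y) ↦ ((−x₁,x₂,…,x_n),y) is a colour-preserving automorphism of Cay(ℤ_m ≀ ℤ_n; {a^{±1}, b^{±1}}) that fixes the identity but is not a group automorphism. -/
/-!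
`ψ` negates the coordinate indexed by `0`. Right multiplication by `b` only moves the rotation
part, which `ψ` ignores. Right multiplication of `x` by `a` adds `1` at coordinate `x.2`; `ψ` turns
this into adding `-1`, i.e. into an `a⁻¹`-edge, exactly when `x.2 = 0`. So `ψ` preserves colours
and fixes `1`, and an affine map fixing `1` is an automorphism. But `ψ` fixes `b a b⁻¹`, which is
supported at coordinate `1`, whereas a homomorphism agreeing with `ψ` sends it to `b a⁻¹ b⁻¹`;
these differ because `-1 ≠ 1` in `ℤ_m` for `m ≥ 3`.
-/

/-- A map `φ` is colour-preserving for the Cayley graph `Cay(G;S)` if it sends each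
edge `x — xs` (coloured `{s,s⁻¹}`) to an edge of the same colour. -/
def ColourPreserving {G : Type*} [Group G] (S : Set G) (φ : G → G) : Prop :=
  ∀ x : G, ∀ s ∈ S, φ (x * s) = φ x * s ∨ φ (x * s) = φ x * s⁻¹

/-- A map `φ` is colour-permuting for `Cay(G;S)` if it permutes the edge colours:
there is a permutation `π` of `S` with `π (s⁻¹) = (π s)⁻¹` and
`φ(xs) ∈ {φ(x) π(s)^{±1}}`. -/
def ColourPermuting {G : Type*} [Group G] (S : Set G) (φ : G → G) : Prop :=
  ∃ π : G → G, Set.BijOn π S S ∧ (∀ s ∈ S, π s⁻¹ = (π s)⁻¹) ∧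
    ∀ x : G, ∀ s ∈ S, φ (x * s) = φ x * π s ∨ φ (x * s) = φ x * (π s)⁻¹

/-- `φ : G → G` is affine if it is a group automorphism composed with a left translation. -/
def IsAffineMap {G : Type*} [Group G] (φ : G → G) : Prop :=
  ∃ (α : G ≃* G) (g : G), ∀ x, φ x = α (g * x)

/-- `G` is CCA if every colour-preserving automorphism of every connected Cayley graph
on `G` is affine. -/
def IsCCA (G : Type*) [Group G] : Prop :=
  ∀ S : Set G, S⁻¹ = S → Subgroup.closure S = ⊤ →
    ∀ φ : Equiv.Perm G, ColourPreserving S ⇑φ → IsAffineMap ⇑φ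

/-- `G` is strongly CCA if every colour-permuting automorphism of every connected
Cayley graph on `G` is affine. -/
def IsStronglyCCA (G : Type*) [Group G] : Prop :=
  ∀ S : Set G, S⁻¹ = S → Subgroup.closure S = ⊤ →
    ∀ φ : Equiv.Perm G, ColourPermuting S ⇑φ → IsAffineMap ⇑φ

/-- The wreath product `ℤ_m ≀ ℤ_n = (ℤ_m)^n ⋊ ℤ_n`, with `ℤ_n` cyclically permuting
the coordinates (indexed by `ℤ_n`). -/
def Wr (m n : ℕ) : Type := (ZMod n → ZMod m) × ZMod n

instance (m n : ℕ) : Group (Wr m n) where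
  mul p q := (p.1 + fun i => q.1 (i - p.2), p.2 + q.2)
  one := (0, 0)
  inv p := (fun i => -p.1 (i + p.2), -p.2)
  mul_assoc p q r := by
    refine Prod.ext ?_ (add_assoc _ _ _)
    funext i
    show p.1 i + q.1 (i - p.2) + r.1 (i - (p.2 + q.2)) =
      p.1 i + (q.1 (i - p.2) + r.1 (i - p.2 - q.2))
    rw [sub_sub, add_assoc]
  one_mul p := by
    refine Prod.ext ?_ (zero_add _)
    funext i
    show 0 + p.1 (i - 0) = p.1 i
    rw [sub_zero, zero_add]
  mul_one p := by
    refine Prod.ext ?_ (add_zero _)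
    funext i
    show p.1 i + 0 = p.1 i
    rw [add_zero]
  inv_mul_cancel p := by
    refine Prod.ext ?_ (neg_add_cancel _)
    funext i
    show -p.1 (i + p.2) + p.1 (i - -p.2) = 0
    rw [sub_neg_eq_add, neg_add_cancel]

section ColourPreserving

variable {G : Type*} [Group G]

def PreservesColour (s : G) (φ : G → G) : Prop :=
  ∀ x : G, φ (x * s) = φ x * s ∨ φ (x * s) = φ x * s⁻¹

theorem PreservesColour.inv {s : G} {φ : G → G} (h : PreservesColour s φ) :
    PreservesColour s⁻¹ φ := by
  intro x
  rw [inv_inv]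
  rcases h (x * s⁻¹) with hs | hs <;> rw [inv_mul_cancel_right] at hs
  · exact Or.inl (by rw [hs, mul_inv_cancel_right])
  · exact Or.inr (by rw [hs, inv_mul_cancel_right])

theorem colourPreserving_of_preservesColour {a b : G} {φ : G → G}
    (ha : PreservesColour a φ) (hb : PreservesColour b φ) :
    ColourPreserving {a, a⁻¹, b, b⁻¹} φ := by
  rintro x s (rfl | rfl | rfl | rfl)
  exacts [ha x, ha.inv x, hb x, hb.inv x]

theorem inv_insert_inv_insert_inv_singleton (a b : G) :
    ({a, a⁻¹, b, b⁻¹} : Set G)⁻¹ = {a, a⁻¹, b, b⁻¹} := by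
  simp only [Set.inv_insert, Set.inv_singleton, inv_inv]
  ext
  simp only [Set.mem_insert_iff, Set.mem_singleton_iff]
  tauto

theorem IsAffineMap.exists_mulEquiv_of_map_one {φ : G → G} (hφ : IsAffineMap φ)
    (h1 : φ 1 = 1) : ∃ α : G ≃* G, φ = ⇑α := by
  obtain ⟨α, g, hαg⟩ := hφ
  have hg : g = 1 := by simpa using (hαg 1).symm.trans h1
  exact ⟨α, funext fun x => by rw [hαg, hg, one_mul]⟩

theorem not_isCCA_of_colourPreserving {S : Set G} (hS : S⁻¹ = S)
    (hgen : Subgroup.closure S = ⊤) (φ : Equiv.Perm G) (hφ : ColourPreserving S φ)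
    (h1 : φ 1 = 1) (hnot : ¬ ∃ α : G ≃* G, ⇑φ = ⇑α) : ¬ IsCCA G :=
  fun hcca => hnot ((hcca S hS hgen φ hφ).exists_mulEquiv_of_map_one h1)

end ColourPreserving

namespace Wr

variable {m n : ℕ}

@[ext]
theorem ext {p q : Wr m n} (h₁ : p.1 = q.1) (h₂ : p.2 = q.2) : p = q := Prod.ext h₁ h₂

@[simp]
theorem mul_fst (p q : Wr m n) : (p * q).1 = p.1 + fun i => q.1 (i - p.2) := rfl

@[simp]
theorem mul_snd (p q : Wr m n) : (p * q).2 = p.2 + q.2 := rfl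

@[simp]
theorem one_fst : (1 : Wr m n).1 = 0 := rfl

@[simp]
theorem one_snd : (1 : Wr m n).2 = 0 := rfl

-- A bare pair `(f, k)` in a product elaborates at type `_ × _`, whose componentwise
-- multiplication is not that of `Wr m n`.
def mk (f : ZMod n → ZMod m) (k : ZMod n) : Wr m n := (f, k)

@[simp]
theorem mk_fst (f : ZMod n → ZMod m) (k : ZMod n) : (mk f k).1 = f := rfl

@[simp]
theorem mk_snd (f : ZMod n → ZMod m) (k : ZMod n) : (mk f k).2 = k := rfl

def rot (k : ZMod n) : Wr m n := mk 0 k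

def single (j : ZMod n) (c : ZMod m) : Wr m n := mk (fun i => if i = j then c else 0) 0

def ofBase : Multiplicative (ZMod n → ZMod m) →* Wr m n :=
  MonoidHom.mk' (fun f => mk f.toAdd 0) fun f g => by ext <;> simp

@[simp]
theorem rot_fst (k : ZMod n) : (rot k : Wr m n).1 = 0 := rfl

@[simp]
theorem rot_snd (k : ZMod n) : (rot k : Wr m n).2 = k := rfl

@[simp]
theorem single_fst (j : ZMod n) (c : ZMod m) :
    (single j c).1 = fun i => if i = j then c else 0 := rfl

@[simp]
theorem single_snd (j : ZMod n) (c : ZMod m) : (single j c).2 = 0 := rfl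

@[simp]
theorem ofBase_fst (f : Multiplicative (ZMod n → ZMod m)) : (ofBase f).1 = f.toAdd := rfl

@[simp]
theorem ofBase_snd (f : Multiplicative (ZMod n → ZMod m)) : (ofBase f).2 = 0 := rfl

theorem ofBase_mul_rot (p : Wr m n) : ofBase (.ofAdd p.1) * rot p.2 = p := by
  ext <;> simp

theorem ofBase_pi_single (j : ZMod n) (c : ZMod m) :
    ofBase (.ofAdd (Pi.single j c)) = single j c := by
  ext i <;> simp [Pi.single_apply]

theorem rot_zero : (rot 0 : Wr m n) = 1 := rfl

theorem rot_mul_rot (j k : ZMod n) : (rot j * rot k : Wr m n) = rot (j + k) := by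
  ext <;> simp

theorem single_zero (j : ZMod n) : single j (0 : ZMod m) = 1 := by
  ext <;> simp

theorem single_mul_single (j : ZMod n) (c d : ZMod m) :
    single j c * single j d = single j (c + d) := by
  ext i <;> simp only [mul_fst, single_fst, single_snd, sub_zero, Pi.add_apply, mul_snd]
  · split_ifs <;> simp
  · simp

theorem single_injective (j : ZMod n) : Function.Injective (single (m := m) j) :=
  fun c d h => by simpa using congrFun (congrArg Prod.fst h) j

theorem rot_mul_single_mul_rot (j : ZMod n) (c : ZMod m) :
    rot j * single 0 c * rot (-j) = single j c := by
  ext i <;> simp [sub_eq_zero]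

theorem single_one_pow (j : ZMod n) (t : ℕ) : single j (1 : ZMod m) ^ t = single j t := by
  induction t with
  | zero => rw [pow_zero, Nat.cast_zero, single_zero]
  | succ t ih => rw [pow_succ, ih, single_mul_single, Nat.cast_succ]

theorem rot_one_pow (t : ℕ) : rot (1 : ZMod n) ^ t = (rot t : Wr m n) := by
  induction t with
  | zero => rw [pow_zero, Nat.cast_zero, rot_zero]
  | succ t ih => rw [pow_succ, ih, rot_mul_rot, Nat.cast_succ]

theorem eq_top_of_single_mem_of_rot_mem [NeZero m] [NeZero n] {H : Subgroup (Wr m n)}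
    (ha : single 0 1 ∈ H) (hb : rot 1 ∈ H) : H = ⊤ := by
  have hrot (k : ZMod n) : rot k ∈ H := by
    simpa [rot_one_pow] using H.pow_mem hb k.val
  have hsingle (j : ZMod n) (c : ZMod m) : single j c ∈ H := by
    rw [← rot_mul_single_mul_rot]
    refine H.mul_mem (H.mul_mem (hrot j) ?_) (hrot (-j))
    simpa [single_one_pow] using H.pow_mem ha c.val
  have hbase (f : ZMod n → ZMod m) : Multiplicative.ofAdd f ∈ H.comap ofBase := by
    rw [← Finset.univ_sum_single f, ofAdd_sum]
    exact Subgroup.prod_mem _ fun j _ => by simpa [ofBase_pi_single] using hsingle j (f j)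
  exact H.eq_top_iff'.2 fun p => ofBase_mul_rot p ▸ H.mul_mem (hbase p.1) (hrot p.2)

theorem closure_eq_top [NeZero m] [NeZero n] :
    Subgroup.closure ({single 0 1, (single 0 1)⁻¹, rot 1, (rot 1)⁻¹} : Set (Wr m n)) = ⊤ :=
  eq_top_of_single_mem_of_rot_mem (Subgroup.subset_closure (by simp))
    (Subgroup.subset_closure (by simp))

theorem single_inv (j : ZMod n) (c : ZMod m) : (single j c)⁻¹ = single j (-c) :=
  inv_eq_of_mul_eq_one_right (by rw [single_mul_single, add_neg_cancel, single_zero])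

def negAtZero (p : Wr m n) : Wr m n := mk (fun i => if i = 0 then -p.1 i else p.1 i) p.2

@[simp]
theorem negAtZero_fst (p : Wr m n) :
    (negAtZero p).1 = fun i => if i = 0 then -p.1 i else p.1 i := rfl

@[simp]
theorem negAtZero_snd (p : Wr m n) : (negAtZero p).2 = p.2 := rfl

theorem negAtZero_involutive : Function.Involutive (negAtZero (m := m) (n := n)) := by
  intro p
  ext i <;> simp only [negAtZero_fst, negAtZero_snd]
  split_ifs <;> simp

theorem negAtZero_one : negAtZero (1 : Wr m n) = 1 := by
  ext <;> simp

theorem negAtZero_mul_rot (p : Wr m n) (k : ZMod n) :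
    negAtZero (p * rot k) = negAtZero p * rot k := by
  ext <;> simp

theorem negAtZero_mul_single (p : Wr m n) (j : ZMod n) (c : ZMod m) :
    negAtZero (p * single j c) = negAtZero p * single j (if j + p.2 = 0 then -c else c) := by
  ext i
  · simp only [negAtZero_fst, mul_fst, single_fst, Pi.add_apply, sub_eq_iff_eq_add]
    split_ifs <;> simp_all [add_comm]
  · simp

theorem negAtZero_single (j : ZMod n) (c : ZMod m) :
    negAtZero (single j c) = single j (if j = 0 then -c else c) := by
  simpa [negAtZero_one] using negAtZero_mul_single 1 j c

theorem negAtZero_rot (k : ZMod n) : negAtZero (rot k : Wr m n) = rot k := by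
  simpa [negAtZero_one] using negAtZero_mul_rot 1 k

theorem preservesColour_single_negAtZero (c : ZMod m) :
    PreservesColour (single 0 c : Wr m n) negAtZero := by
  intro p
  rw [negAtZero_mul_single, zero_add, single_inv]
  split_ifs
  exacts [Or.inr rfl, Or.inl rfl]

theorem preservesColour_rot_negAtZero (k : ZMod n) :
    PreservesColour (rot k : Wr m n) negAtZero :=
  fun p => Or.inl (negAtZero_mul_rot p k)

theorem colourPreserving_negAtZero :
    ColourPreserving {single 0 1, (single 0 1)⁻¹, rot 1, (rot 1)⁻¹} (negAtZero (m := m) (n := n)) :=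
  colourPreserving_of_preservesColour (preservesColour_single_negAtZero 1)
    (preservesColour_rot_negAtZero 1)

theorem negAtZero_ne_monoidHom [Fact (2 < m)] [Fact (1 < n)] (f : Wr m n →* Wr m n) :
    negAtZero ≠ ⇑f := by
  intro hf
  have hconj : negAtZero (rot 1 * single 0 1 * rot (-1) : Wr m n) =
      negAtZero (rot 1) * negAtZero (single 0 1) * negAtZero (rot (-1)) := by
    simp only [hf, map_mul]
  rw [rot_mul_single_mul_rot, negAtZero_single, negAtZero_rot, negAtZero_single, negAtZero_rot,
    if_neg one_ne_zero, if_pos rfl, rot_mul_single_mul_rot] at hconj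
  exact ZMod.neg_one_ne_one (single_injective 1 hconj).symm

end Wr

/-- For `m ≥ 3`, `n ≥ 2`, the wreath product `ℤ_m ≀ ℤ_n` is not CCA: negating the
coordinate indexed by `0` is a colour-preserving automorphism of
`Cay(ℤ_m ≀ ℤ_n; {a^{±1}, b^{±1}})` fixing the identity that is not a group
automorphism. -/
theorem stmt_9 (m n : ℕ) (hm : 3 ≤ m) (hn : 2 ≤ n) :
    let a : Wr m n := (fun i => if i = 0 then 1 else 0, 0)
    let b : Wr m n := (0, 1)
    let S : Set (Wr m n) := {a, a⁻¹, b, b⁻¹}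
    let ψ : Wr m n → Wr m n := fun p => (fun i => if i = 0 then -p.1 i else p.1 i, p.2)
    Function.Bijective ψ ∧ ColourPreserving S ψ ∧ ψ 1 = 1 ∧
      (¬ ∃ α : Wr m n ≃* Wr m n, ψ = ⇑α) ∧
      ¬ IsCCA (Wr m n) := by
  intro a b S ψ
  have : Fact (2 < m) := ⟨hm⟩
  have : Fact (1 < n) := ⟨hn⟩
  have : NeZero m := NeZero.of_gt hm
  have : NeZero n := NeZero.of_gt hn
  have hcp : ColourPreserving S ψ := Wr.colourPreserving_negAtZero
  have hnot : ¬ ∃ α : Wr m n ≃* Wr m n, ψ = ⇑α :=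
    fun ⟨α, hα⟩ => Wr.negAtZero_ne_monoidHom α.toMonoidHom hα
  refine ⟨Wr.negAtZero_involutive.bijective, hcp, Wr.negAtZero_one, hnot, ?_⟩
  exact not_isCCA_of_colourPreserving (inv_insert_inv_insert_inv_singleton a b)
    Wr.closure_eq_top Wr.negAtZero_involutive.toPerm hcp Wr.negAtZero_one hnot
end

section
/- If T is a generating set of a finite group H, and σ is a nontrivial automorphism of H with σ(t) ∈ {t, t⁻¹} for every t ∈ T, then the group (H ⋊ ⟨σ⟩) × ℤ₂ is not strongly CCA. -/
/-!
Since `σ` fixes or inverts the generators, `σ² = 1`, so `K = ⟨σ⟩` is isomorphic to `C = ℤ₂`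
via some `e`. Write each element of `G = (H ⋊ K) × C` as `h · v` with `h ∈ H`, `v ∈ K × C`, and
let `φ (h · v) = h · L v`, where `L (k, c) = (e⁻¹ c, e k)`. For the connection set
`S = (T ∪ T⁻¹) ∪ (K × C \ {1})`, the map `φ` is colour-permuting with `π = φ|_S`: along an edge
`v ∈ K × C` it is a homomorphism, and along an edge `t ∈ T ∪ T⁻¹` it moves to an edge
`t^{±1}`, because every element of `K` fixes or inverts `t`. But `φ 1 = 1` and `φ` is not a
homomorphism: `φ (k · h) = (k • h) · e k` while `φ k · φ h = h · e k`. So `φ` is not affine.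
-/

namespace MulAut

variable {H : Type*} [Group H]

def fixOrInvert (T : Set H) : Subgroup (MulAut H) where
  carrier := {α | ∀ t ∈ T, α t = t ∨ α t = t⁻¹}
  one_mem' t _ := Or.inl rfl
  mul_mem' {α β} hα hβ t ht := by
    rcases hβ t ht with hβt | hβt <;> rcases hα t ht with hαt | hαt <;> simp [hαt, hβt]
  inv_mem' {α} hα t ht := by
    rcases hα t ht with hαt | hαt
    · exact Or.inl (by rw [inv_apply, MulEquiv.symm_apply_eq, hαt])
    · exact Or.inr (by rw [inv_apply, MulEquiv.symm_apply_eq, map_inv, hαt, inv_inv])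

lemma sq_eq_one_of_mem_fixOrInvert {T : Set H} (hT : Subgroup.closure T = ⊤) {σ : MulAut H}
    (hσ : σ ∈ fixOrInvert T) : σ ^ 2 = 1 :=
  MulEquiv.toMonoidHom_injective <| MonoidHom.eq_of_eqOn_dense hT fun t ht => by
    rcases hσ t ht with h | h <;> simp [sq, h]

end MulAut

lemma IsAffineMap.map_mul_of_map_one {G : Type*} [Group G] {φ : G → G} (hφ : IsAffineMap φ)
    (h1 : φ 1 = 1) (x y : G) : φ (x * y) = φ x * φ y := by
  obtain ⟨α, g, hαg⟩ := hφ
  have hg : g = 1 := α.injective (by rw [← mul_one g, ← hαg, h1, map_one])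
  simp [hαg, hg]

def MulEquiv.prodSwap {K C : Type*} [MulOneClass K] [MulOneClass C] (e : K ≃* C) :
    K × C ≃* K × C :=
  MulEquiv.prodComm.trans (e.symm.prodCongr e)

lemma MulEquiv.prodSwap_apply {K C : Type*} [MulOneClass K] [MulOneClass C] (e : K ≃* C)
    (v : K × C) : e.prodSwap v = (e.symm v.2, e v.1) := rfl

namespace SemidirectProduct

variable {H K C : Type*} [Group H] [Group K] [Group C] (ψ : K →* MulAut H)

def inlProd : H →* (H ⋊[ψ] K) × C := (MonoidHom.inl _ C).comp inl

def inrProd : K × C →* (H ⋊[ψ] K) × C := inr.prodMap (MonoidHom.id C)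

@[simp] lemma inlProd_apply (h : H) : (inlProd ψ h : (H ⋊[ψ] K) × C) = (inl h, 1) := rfl

@[simp] lemma inrProd_apply (v : K × C) : inrProd ψ v = (inr v.1, v.2) := rfl

lemma inlProd_mul_inrProd (x : (H ⋊[ψ] K) × C) :
    inlProd ψ x.1.left * inrProd ψ (x.1.right, x.2) = x := by
  ext <;> simp

/-- `h · v ↦ h · L v` for `h ∈ H` and `v ∈ K × C`. -/
def twist (L : K × C ≃* K × C) : Equiv.Perm ((H ⋊[ψ] K) × C) where
  toFun x := (⟨x.1.left, (L (x.1.right, x.2)).1⟩, (L (x.1.right, x.2)).2)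
  invFun x := (⟨x.1.left, (L.symm (x.1.right, x.2)).1⟩, (L.symm (x.1.right, x.2)).2)
  left_inv x := by simp
  right_inv x := by simp

variable (L : K × C ≃* K × C)

lemma twist_apply (x : (H ⋊[ψ] K) × C) :
    twist ψ L x = (⟨x.1.left, (L (x.1.right, x.2)).1⟩, (L (x.1.right, x.2)).2) := rfl

lemma twist_one : twist ψ L 1 = 1 := by
  ext <;> simp [twist_apply, Prod.mk_one_one]

lemma twist_inlProd (h : H) : twist ψ L (inlProd ψ h) = inlProd ψ h := by
  ext <;> simp [twist_apply, Prod.mk_one_one]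

lemma twist_mul_inrProd (x : (H ⋊[ψ] K) × C) (v : K × C) :
    twist ψ L (x * inrProd ψ v) = twist ψ L x * inrProd ψ (L v) := by
  have hL := map_mul L (x.1.right, x.2) v
  rw [Prod.mk_mul_mk] at hL
  ext <;> simp [twist_apply, hL]

lemma twist_inrProd (v : K × C) : twist ψ L (inrProd ψ v) = inrProd ψ (L v) := by
  ext <;> simp [twist_apply]

lemma twist_mul_inlProd (x : (H ⋊[ψ] K) × C) (h : H) :
    twist ψ L (x * inlProd ψ h) =
      twist ψ L x * inlProd ψ ((ψ (L (x.1.right, x.2)).1)⁻¹ (ψ x.1.right h)) := by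
  ext <;> simp [twist_apply]

def cayleySet (T : Set H) : Set ((H ⋊[ψ] K) × C) :=
  inlProd ψ '' (T ∪ T⁻¹) ∪ inrProd ψ '' {1}ᶜ

variable {T : Set H}

lemma cayleySet_inv :
    (cayleySet ψ T : Set ((H ⋊[ψ] K) × C))⁻¹ = cayleySet ψ T := by
  simp only [cayleySet, Set.union_inv, ← Set.image_inv, Set.compl_inv, Set.inv_singleton,
    inv_one, inv_inv, Set.union_comm T⁻¹]

lemma closure_cayleySet (hT : Subgroup.closure T = ⊤) :
    Subgroup.closure (cayleySet ψ T : Set ((H ⋊[ψ] K) × C)) = ⊤ := by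
  refine eq_top_iff.mpr fun x _ => inlProd_mul_inrProd ψ x ▸ mul_mem ?_ ?_
  · have hH : (Subgroup.closure T).map (inlProd (C := C) ψ) ≤
        Subgroup.closure (cayleySet ψ T) := by
      rw [MonoidHom.map_closure]
      exact Subgroup.closure_mono
        (Set.subset_union_of_subset_left (Set.image_mono Set.subset_union_left) _)
    exact hH ⟨_, hT ▸ Subgroup.mem_top _, rfl⟩
  · by_cases hv : ((x.1.right, x.2) : K × C) = 1
    · rw [hv, map_one]
      exact one_mem _
    · exact Subgroup.subset_closure (Or.inr ⟨_, hv, rfl⟩)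

lemma colourPermuting_twist (hψT : ∀ k, ∀ t ∈ T, ψ k t = t ∨ ψ k t = t⁻¹) :
    ColourPermuting (cayleySet ψ T) (twist ψ L) := by
  have hψT' : ∀ k, ∀ t ∈ T ∪ T⁻¹, ψ k t = t ∨ ψ k t = t⁻¹ := by
    rintro k t (ht | ht)
    · exact hψT k t ht
    · rcases hψT k _ ht with h | h <;> simp only [map_inv, inv_inv, inv_eq_iff_eq_inv] at h <;>
        simp [h]
  refine ⟨twist ψ L, ⟨?_, (twist ψ L).injective.injOn, ?_⟩, ?_, ?_⟩
  · rintro _ (⟨t, ht, rfl⟩ | ⟨v, hv, rfl⟩)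
    · exact Or.inl ⟨t, ht, (twist_inlProd ψ L t).symm⟩
    · exact Or.inr ⟨L v, by simpa using hv, (twist_inrProd ψ L v).symm⟩
  · rintro _ (⟨t, ht, rfl⟩ | ⟨v, hv, rfl⟩)
    · exact ⟨_, Or.inl ⟨t, ht, rfl⟩, twist_inlProd ψ L t⟩
    · exact ⟨inrProd ψ (L.symm v), Or.inr ⟨_, by simpa using hv, rfl⟩, by
        rw [twist_inrProd, MulEquiv.apply_symm_apply]⟩
  · rintro _ (⟨t, -, rfl⟩ | ⟨v, -, rfl⟩)
    · simp only [← map_inv, twist_inlProd]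
    · simp only [← map_inv, twist_inrProd]
  · rintro x _ (⟨t, ht, rfl⟩ | ⟨v, -, rfl⟩)
    · rw [twist_mul_inlProd, twist_inlProd, ← map_inv, ← MulAut.mul_apply, ← map_inv,
        ← map_mul]
      rcases hψT' _ t ht with h | h
      · exact Or.inl (by rw [h])
      · exact Or.inr (by rw [h])
    · exact Or.inl (by rw [twist_mul_inrProd, twist_inrProd])

lemma not_isAffineMap_twist_prodSwap (e : K ≃* C) (hψ : ψ ≠ 1) :
    ¬ IsAffineMap (twist ψ e.prodSwap) := by
  intro haff
  obtain ⟨k, hk⟩ : ∃ k, ψ k ≠ 1 := by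
    by_contra! h
    exact hψ (MonoidHom.ext h)
  obtain ⟨h, hh⟩ : ∃ h, ψ k h ≠ h := by
    by_contra! h
    exact hk (MulEquiv.ext h)
  have hmul := haff.map_mul_of_map_one (twist_one ψ _) (inrProd ψ (k, 1)) (inlProd ψ h)
  rw [twist_mul_inlProd, twist_inlProd, mul_right_inj] at hmul
  have hleft := inl_injective (congrArg Prod.fst hmul)
  simp only [inrProd_apply, right_inr, MulEquiv.prodSwap_apply, map_one, inv_one, MulAut.one_apply]
    at hleft
  exact hh hleft

theorem not_isStronglyCCA_prod (e : K ≃* C) {T : Set H} (hT : Subgroup.closure T = ⊤)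
    (hψT : ∀ k, ∀ t ∈ T, ψ k t = t ∨ ψ k t = t⁻¹) (hψ : ψ ≠ 1) :
    ¬ IsStronglyCCA ((H ⋊[ψ] K) × C) := fun hCCA =>
  not_isAffineMap_twist_prodSwap ψ e hψ <|
    hCCA _ (cayleySet_inv ψ) (closure_cayleySet ψ hT) _ (colourPermuting_twist ψ _ hψT)

end SemidirectProduct

theorem stmt_17_general {H : Type*} [Group H] (T : Set H)
    (hT : Subgroup.closure T = ⊤) (σ : MulAut H) (hσ : σ ≠ 1)
    (hinv : ∀ t ∈ T, σ t = t ∨ σ t = t⁻¹) :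
    ¬ IsStronglyCCA
      ((SemidirectProduct H ↥(Subgroup.zpowers σ) (Subgroup.zpowers σ).subtype) ×
        Multiplicative (ZMod 2)) := by
  have hσT : σ ∈ MulAut.fixOrInvert T := hinv
  have horder : orderOf σ = 2 := orderOf_eq_prime (MulAut.sq_eq_one_of_mem_fixOrInvert hT hσT) hσ
  refine SemidirectProduct.not_isStronglyCCA_prod _
    (mulEquivOfPrimeCardEq (by rw [Nat.card_zpowers, horder]) (by simp)) hT
    (fun k => Subgroup.zpowers_le.mpr hσT k.2) fun h => hσ ?_
  simpa using DFunLike.congr_fun h ⟨σ, Subgroup.mem_zpowers σ⟩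

/-- If `T` generates `H` and the nontrivial automorphism `σ` fixes or inverts each
element of `T`, then `(H ⋊ ⟨σ⟩) × ℤ₂` is not strongly CCA. -/
theorem stmt_17 {H : Type*} [Group H] [Finite H] (T : Set H)
    (hT : Subgroup.closure T = ⊤) (σ : MulAut H) (hσ : σ ≠ 1)
    (hinv : ∀ t ∈ T, σ t = t ∨ σ t = t⁻¹) :
    ¬ IsStronglyCCA
      ((SemidirectProduct H ↥(Subgroup.zpowers σ) (Subgroup.zpowers σ).subtype) ×
        Multiplicative (ZMod 2)) :=
  stmt_17_general T hT σ hσ hinv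
end
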